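/- Let z_1, …, z_n ∈ ℂ be distinct with Re z_i > 0, let η_1, …, η_n ∈ ℂ^m be unit vectors, set L_k(s) = I − (2 Re z_k/(s + conj(z_k))) η_k η_k^H and L(s) = L_1(s) ⋯ L_n(s), and let Y be an m×m matrix of rational functions over ℂ, each entry proper and with no poles in the closed right half-plane {s : Re s ≥ 0}. Then there exists an m×m matrix T of rational functions, each entry proper and with no poles in the closed right half-plane, such that for every s at which all terms are defined, L(s)^{−1} Y(s) = T(s) + Σ_{i=1}^n (1/(s − z_i)) R_i, where R_i = L_n(z_i)^{−1} ⋯ L_{i+1}(z_i)^{−1} · (2 Re z_i) η_i η_i^H · L_{i−1}(z_i)^{−1} ⋯ L_1(z_i)^{−1} · Y(z_i). (Matrix form of Lemma 1: expansion of L^{−1}Y into a stable part plus simple antistable residue terms at the zeros z_i.) -/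

import Mathlib

open Matrix

/-- The rank-one matrix Blaschke (all-pass) factor
`L_{z,η}(s) = I - (2 Re z/(s + conj z)) η ηᴴ`. -/
noncomputable def blaschkeFactor (m : ℕ) (z : ℂ) (η : Fin m → ℂ) (s : ℂ) :
    Matrix (Fin m) (Fin m) ℂ :=
  1 - ((2 * (z.re : ℂ)) / (s + starRingEnd ℂ z)) •
    Matrix.vecMulVec η (fun i => starRingEnd ℂ (η i))

/-- The residue matrix
`R_i = L_n(z_i)⁻¹ ⋯ L_{i+1}(z_i)⁻¹ (2 Re z_i) η_i η_iᴴ L_{i-1}(z_i)⁻¹ ⋯ L_1(z_i)⁻¹ Y(z_i)`. -/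
noncomputable def residueMatrix (m n : ℕ) (z : Fin n → ℂ) (η : Fin n → Fin m → ℂ)
    (Y : Matrix (Fin m) (Fin m) (RatFunc ℂ)) (i : Fin n) :
    Matrix (Fin m) (Fin m) ℂ :=
  ((List.ofFn fun k : Fin n =>
      if i < k then (blaschkeFactor m (z k) (η k) (z i))⁻¹ else 1).reverse).prod *
    (((2 * ((z i).re : ℂ)) •
      Matrix.vecMulVec (η i) (fun l => starRingEnd ℂ (η i l)))) *
    ((List.ofFn fun k : Fin n =>
      if k < i then (blaschkeFactor m (z k) (η k) (z i))⁻¹ else 1).reverse).prod *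
    (Y.map (RatFunc.eval (RingHom.id ℂ) (z i)))

/-!
Over `ℂ(X)` the inverse of `L` is the product `L_n⁻¹ ⋯ L_1⁻¹` of the rational matrices
`L_k⁻¹ = I + 2 Re z_k/(X - z_k) η_k η_kᴴ`, whose only pole is `z_k`. Take
`T = L⁻¹ Y - Σ_i R_i/(X - z_i)`. Proper rational functions form a subring (the valuation ring
at infinity), so `T` is proper. Rational functions without a pole at a point `w` also form a
subring, on which evaluation at `w` is a ring homomorphism; this gives the identity at every
admissible `s`, and shows that `T` has no pole in the closed right half-plane away from the
`z_i`. At `z_i`, writing `L⁻¹ = A L_i⁻¹ B` with `A`, `B` regular at `z_i` exhibits a simple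
pole of `L⁻¹ Y` with residue `R_i`, which the subtracted term cancels.
-/

theorem prod_reverse_ofFn_mem {M : Type*} [Monoid M] {S : Submonoid M} {n : ℕ} {F : Fin n → M}
    (hF : ∀ k, F k ∈ S) : (List.ofFn F).reverse.prod ∈ S :=
  S.list_prod_mem fun A hA => List.forall_mem_ofFn_iff.2 hF A (List.mem_reverse.1 hA)

theorem prod_reverse_ofFn_split {M : Type*} [Monoid M] :
    ∀ {n : ℕ} (F : Fin n → M) (i : Fin n),
      (List.ofFn F).reverse.prod =
        (List.ofFn fun k => if i < k then F k else 1).reverse.prod * F i *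
          (List.ofFn fun k => if k < i then F k else 1).reverse.prod
  | 0, _, i => i.elim0
  | n + 1, F, i => by
    induction i using Fin.cases with
    | zero => simp [List.ofFn_succ, Fin.succ_pos]
    | succ j =>
      simp only [List.ofFn_succ, Fin.succ_lt_succ_iff, Fin.not_lt_zero, if_false, Fin.succ_pos,
        if_true, List.reverse_cons, List.prod_append, List.prod_cons, List.prod_nil, mul_one]
      rw [prod_reverse_ofFn_split (fun k => F k.succ) j]
      simp only [mul_assoc]

theorem one_add_smul_mul_one_add_smul {R A : Type*} [CommSemiring R] [Semiring A] [Algebra R A]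
    {P : A} (hP : IsIdempotentElem P) (x y : R) :
    (1 + x • P) * (1 + y • P) = 1 + (x + y + x * y) • P := by
  simp only [mul_add, add_mul, one_mul, mul_one, smul_mul_smul, hP.eq, add_smul]
  abel

namespace RatFunc

open Polynomial

variable {K : Type*} [Field K]

def regularAt (w : K) : Subring (RatFunc K) where
  carrier := {f | f.denom.eval w ≠ 0}
  one_mem' := by simp
  zero_mem' := by simp
  mul_mem' {x y} hx hy h :=
    mul_ne_zero hx hy (by simpa using eval_eq_zero_of_dvd_of_eval_eq_zero (denom_mul_dvd x y) h)
  add_mem' {x y} hx hy h :=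
    mul_ne_zero hx hy (by simpa using eval_eq_zero_of_dvd_of_eval_eq_zero (denom_add_dvd x y) h)
  neg_mem' {x} hx h := by
    rw [neg_eq_neg_one_mul, ← map_one C, ← map_neg C] at h
    have := eval_eq_zero_of_dvd_of_eval_eq_zero (denom_mul_dvd (C (-1)) x) h
    rw [denom_C, one_mul] at this
    exact hx this

theorem mem_regularAt {w : K} {f : RatFunc K} : f ∈ regularAt w ↔ f.denom.eval w ≠ 0 :=
  Iff.rfl

theorem div_mem_regularAt {w : K} {p q : K[X]} (hq : q.eval w ≠ 0) :
    algebraMap K[X] (RatFunc K) p / algebraMap K[X] (RatFunc K) q ∈ regularAt w :=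
  fun h => hq (eval_eq_zero_of_dvd_of_eval_eq_zero (denom_div_dvd p q) h)

theorem algebraMap_mem_regularAt (w : K) (p : K[X]) :
    algebraMap K[X] (RatFunc K) p ∈ regularAt w := by
  simp [mem_regularAt, denom_algebraMap]

theorem C_mem_regularAt (w c : K) : C c ∈ regularAt w := by
  simp [mem_regularAt, denom_C]

theorem eval_algebraMap_div {w : K} {p q : K[X]} (hq : q.eval w ≠ 0) :
    eval (RingHom.id K) w (algebraMap K[X] (RatFunc K) p / algebraMap K[X] (RatFunc K) q) =
      p.eval w / q.eval w := by
  have hq' : algebraMap K[X] (RatFunc K) q ≠ 0 :=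
    algebraMap_ne_zero fun h => hq (by simp [h])
  have key := eval_mul (RingHom.id K) w (div_mem_regularAt (p := p) hq)
    (algebraMap_mem_regularAt w q)
  rw [div_mul_cancel₀ _ hq'] at key
  simp only [eval_algebraMap, Algebra.algebraMap_self, RingHom.id_apply, eval₂_id] at key
  rw [key, mul_div_cancel_right₀ _ hq]

theorem algebraMap_X_sub_C (z : K) :
    algebraMap K[X] (RatFunc K) (Polynomial.X - Polynomial.C z) = X - C z := by
  rw [map_sub, algebraMap_X, algebraMap_C]

theorem inv_X_sub_C_mem_regularAt {w z : K} (h : w ≠ z) : (X - C z)⁻¹ ∈ regularAt w := by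
  have := div_mem_regularAt (p := 1) (q := Polynomial.X - Polynomial.C z) (w := w)
    (by simpa [sub_eq_zero] using h)
  rwa [map_one, one_div, algebraMap_X_sub_C] at this

theorem eval_inv_X_sub_C {w z : K} (h : w ≠ z) :
    eval (RingHom.id K) w (X - C z)⁻¹ = (w - z)⁻¹ := by
  have := eval_algebraMap_div (p := 1) (q := Polynomial.X - Polynomial.C z) (w := w)
    (by simpa [sub_eq_zero] using h)
  rwa [map_one, one_div, algebraMap_X_sub_C, Polynomial.eval_one, Polynomial.eval_sub,
    Polynomial.eval_X, Polynomial.eval_C, one_div] at this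

theorem eval_sum {w : K} {ι : Type*} (s : Finset ι) {f : ι → RatFunc K}
    (hf : ∀ i ∈ s, f i ∈ regularAt w) :
    eval (RingHom.id K) w (∑ i ∈ s, f i) = ∑ i ∈ s, eval (RingHom.id K) w (f i) := by
  classical
  induction s using Finset.induction_on with
  | empty => simp
  | insert a s ha ih =>
    rw [Finset.sum_insert ha, Finset.sum_insert ha, eval_add _ _ (hf a (by simp))
      (Subring.sum_mem _ fun i hi => hf i (by simp [hi])), ih fun i hi => hf i (by simp [hi])]

theorem inv_X_sub_C_mul_sub_eval_mem_regularAt {w : K} {f : RatFunc K}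
    (hf : f ∈ regularAt w) :
    (X - C w)⁻¹ * (f - C (eval (RingHom.id K) w f)) ∈ regularAt w := by
  set c := eval (RingHom.id K) w f
  have hroot : (f.num - Polynomial.C c * f.denom).IsRoot w := by
    simp [c, eval, mem_regularAt.1 hf]
  set r := (f.num - Polynomial.C c * f.denom) /ₘ (Polynomial.X - Polynomial.C w)
  have hr : (Polynomial.X - Polynomial.C w) * r = f.num - Polynomial.C c * f.denom :=
    mul_divByMonic_eq_iff_isRoot.2 hroot
  have hden : algebraMap K[X] (RatFunc K) f.denom ≠ 0 := algebraMap_ne_zero (denom_ne_zero f)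
  have hXw : (X - C w : RatFunc K) ≠ 0 := by
    rw [← algebraMap_X_sub_C]; exact algebraMap_ne_zero (X_sub_C_ne_zero w)
  have hsub : f - C c = (X - C w) * (algebraMap K[X] (RatFunc K) r /
      algebraMap K[X] (RatFunc K) f.denom) := by
    rw [← mul_div_assoc, ← algebraMap_X_sub_C, ← map_mul, hr, map_sub, map_mul, algebraMap_C,
      sub_div, num_div_denom, mul_div_cancel_right₀ _ hden]
  rw [hsub, inv_mul_cancel_left₀ hXw]
  exact div_mem_regularAt hf

variable (K) in
open scoped Classical in
noncomputable def proper : Subring (RatFunc K) := (inftyValuation K).integer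

theorem mem_proper {f : RatFunc K} : f ∈ proper K ↔ f.num.degree ≤ f.denom.degree := by
  classical
  rcases eq_or_ne f 0 with rfl | hf
  · simp
  rw [proper, Valuation.mem_integer_iff, inftyValuation_apply, inftyValuation_of_nonzero K hf,
    ← WithZero.exp_zero, WithZero.exp_le_exp, intDegree, degree_eq_natDegree (num_ne_zero hf),
    degree_eq_natDegree (denom_ne_zero f)]
  simp only [sub_nonpos, Nat.cast_le]

theorem C_mem_proper (c : K) : C c ∈ proper K := by
  classical
  rcases eq_or_ne c 0 with rfl | hc
  · simp
  rw [proper, Valuation.mem_integer_iff, inftyValuation.C _ hc]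

theorem inv_X_sub_C_mem_proper (z : K) : (X - C z)⁻¹ ∈ proper K := by
  classical
  rw [proper, Valuation.mem_integer_iff, map_inv₀, inftyValuation_apply, ← algebraMap_X_sub_C,
    inftyValuation.polynomial _ (X_sub_C_ne_zero z), natDegree_X_sub_C]
  exact inv_le_one_of_one_le₀ (by simpa using WithZero.exp_le_exp.2 (zero_le_one' ℤ))

section Matrix

variable {n : Type*} {w : K}

theorem map_eval_map_C (N : Matrix n n K) : (N.map C).map (eval (RingHom.id K) w) = N := by
  ext i j
  simp

noncomputable def simplePole (z : K) (N : Matrix n n K) : Matrix n n (RatFunc K) :=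
  (X - C z)⁻¹ • N.map C

theorem map_eval_simplePole {z : K} (h : w ≠ z) (N : Matrix n n K) :
    (simplePole z N).map (eval (RingHom.id K) w) = (w - z)⁻¹ • N := by
  ext i j
  simp only [simplePole, Matrix.map_apply, Matrix.smul_apply, smul_eq_mul]
  rw [eval_mul _ _ (inv_X_sub_C_mem_regularAt h) (C_mem_regularAt _ _), eval_inv_X_sub_C h,
    eval_C, RingHom.id_apply]

variable [Fintype n] [DecidableEq n] {A B : Matrix n n (RatFunc K)}

theorem map_eval_add (hA : A ∈ (regularAt w).matrix) (hB : B ∈ (regularAt w).matrix) :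
    (A + B).map (eval (RingHom.id K) w) =
      A.map (eval (RingHom.id K) w) + B.map (eval (RingHom.id K) w) := by
  ext i j
  exact eval_add _ _ (hA i j) (hB i j)

theorem map_eval_mul (hA : A ∈ (regularAt w).matrix) (hB : B ∈ (regularAt w).matrix) :
    (A * B).map (eval (RingHom.id K) w) =
      A.map (eval (RingHom.id K) w) * B.map (eval (RingHom.id K) w) := by
  ext i j
  simp only [Matrix.map_apply, Matrix.mul_apply]
  rw [eval_sum _ fun k _ => mul_mem (hA i k) (hB k j)]
  exact Finset.sum_congr rfl fun k _ => eval_mul _ _ (hA i k) (hB k j)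

theorem map_eval_sum {ι : Type*} (s : Finset ι) {A : ι → Matrix n n (RatFunc K)}
    (hA : ∀ i ∈ s, A i ∈ (regularAt w).matrix) :
    (∑ i ∈ s, A i).map (eval (RingHom.id K) w) =
      ∑ i ∈ s, (A i).map (eval (RingHom.id K) w) := by
  ext j k
  simp only [Matrix.map_apply, Matrix.sum_apply]
  exact eval_sum s fun i hi => hA i hi j k

theorem map_eval_list_prod :
    ∀ {l : List (Matrix n n (RatFunc K))}, (∀ A ∈ l, A ∈ (regularAt w).matrix) →
      l.prod.map (eval (RingHom.id K) w) = (l.map (·.map (eval (RingHom.id K) w))).prod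
  | [], _ => Matrix.map_one _ (eval_zero _ _) (eval_one _ _)
  | A :: l, hl => by
    rw [List.prod_cons, map_eval_mul (hl A (by simp))
      (Subring.list_prod_mem _ fun B hB => hl B (by simp [hB])),
      map_eval_list_prod fun B hB => hl B (by simp [hB]), List.map_cons, List.prod_cons]

theorem map_C_mem_regularAt (N : Matrix n n K) : N.map C ∈ (regularAt w).matrix :=
  fun _ _ => C_mem_regularAt _ _

theorem simplePole_mem_regularAt {z : K} (h : w ≠ z) (N : Matrix n n K) :
    simplePole z N ∈ (regularAt w).matrix :=
  fun _ _ => Subring.mul_mem _ (inv_X_sub_C_mem_regularAt h) (C_mem_regularAt _ _)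

theorem simplePole_mem_proper (z : K) (N : Matrix n n K) : simplePole z N ∈ (proper K).matrix :=
  fun _ _ => Subring.mul_mem _ (inv_X_sub_C_mem_proper z) (C_mem_proper _)

theorem inv_X_sub_C_smul_sub_simplePole_mem_regularAt {M : Matrix n n (RatFunc K)}
    (hM : M ∈ (regularAt w).matrix) :
    (X - C w)⁻¹ • M - simplePole w (M.map (eval (RingHom.id K) w)) ∈
      (regularAt w).matrix := by
  intro i j
  simpa [simplePole, mul_sub] using inv_X_sub_C_mul_sub_eval_mem_regularAt (hM i j)

theorem map_eval_prod_reverse_ofFn {r : ℕ} {F : Fin r → Matrix n n (RatFunc K)}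
    (hF : ∀ k, F k ∈ (regularAt w).matrix) :
    ((List.ofFn F).reverse.prod).map (eval (RingHom.id K) w) =
      (List.ofFn fun k => (F k).map (eval (RingHom.id K) w)).reverse.prod := by
  rw [map_eval_list_prod fun A hA => List.forall_mem_ofFn_iff.2 hF A (List.mem_reverse.1 hA),
    List.map_reverse, List.map_ofFn]
  rfl

end Matrix

end RatFunc

open RatFunc

section Blaschke

variable {m : ℕ}

theorem isIdempotentElem_vecMulVec_conj {η : Fin m → ℂ}
    (hη : ∑ i, starRingEnd ℂ (η i) * η i = 1) :
    IsIdempotentElem (vecMulVec η fun i => starRingEnd ℂ (η i)) := by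
  rw [IsIdempotentElem, vecMulVec_mul_vecMulVec, dotProduct, hη, one_smul]

theorem inv_blaschkeFactor {z s : ℂ} {η : Fin m → ℂ}
    (hη : ∑ i, starRingEnd ℂ (η i) * η i = 1) (hsz : s ≠ z)
    (hs : s + starRingEnd ℂ z ≠ 0) :
    (blaschkeFactor m z η s)⁻¹ =
      1 + (s - z)⁻¹ •
        ((2 * (z.re : ℂ)) • vecMulVec η fun i => starRingEnd ℂ (η i)) := by
  refine Matrix.inv_eq_right_inv ?_
  have hsz' : s - z ≠ 0 := sub_ne_zero.2 hsz
  have hre : z + starRingEnd ℂ z = 2 * (z.re : ℂ) := by rw [Complex.add_conj]; push_cast; ring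
  rw [blaschkeFactor, sub_eq_add_neg, ← neg_smul, smul_smul,
    one_add_smul_mul_one_add_smul (isIdempotentElem_vecMulVec_conj hη)]
  convert add_zero (1 : Matrix (Fin m) (Fin m) ℂ)
  convert zero_smul ℂ _
  field_simp
  linear_combination (2 * (z.re : ℂ)) * hre

noncomputable def blaschkeFactorInv (m : ℕ) (z : ℂ) (η : Fin m → ℂ) :
    Matrix (Fin m) (Fin m) (RatFunc ℂ) :=
  1 + simplePole z ((2 * (z.re : ℂ)) • vecMulVec η fun i => starRingEnd ℂ (η i))

theorem blaschkeFactorInv_mem_regularAt {w z : ℂ} (h : w ≠ z) (η : Fin m → ℂ) :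
    blaschkeFactorInv m z η ∈ (regularAt w).matrix :=
  add_mem (one_mem _) (simplePole_mem_regularAt h _)

theorem blaschkeFactorInv_mem_proper (z : ℂ) (η : Fin m → ℂ) :
    blaschkeFactorInv m z η ∈ (proper ℂ).matrix :=
  add_mem (one_mem _) (simplePole_mem_proper z _)

theorem map_eval_blaschkeFactorInv {z s : ℂ} {η : Fin m → ℂ}
    (hη : ∑ i, starRingEnd ℂ (η i) * η i = 1) (hsz : s ≠ z)
    (hs : s + starRingEnd ℂ z ≠ 0) :
    (blaschkeFactorInv m z η).map (eval (RingHom.id ℂ) s) = (blaschkeFactor m z η s)⁻¹ := by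
  rw [blaschkeFactorInv, map_eval_add (one_mem _) (simplePole_mem_regularAt hsz _),
    Matrix.map_one _ (eval_zero _ _) (eval_one _ _), map_eval_simplePole hsz,
    inv_blaschkeFactor hη hsz hs]

variable {n : ℕ} (z : Fin n → ℂ) (η : Fin n → Fin m → ℂ)
  (Y : Matrix (Fin m) (Fin m) (RatFunc ℂ))

noncomputable def inverseBlaschkeProduct : Matrix (Fin m) (Fin m) (RatFunc ℂ) :=
  (List.ofFn fun k => blaschkeFactorInv m (z k) (η k)).reverse.prod

theorem inverseBlaschkeProduct_mem_regularAt {w : ℂ} (hw : ∀ k, w ≠ z k) :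
    inverseBlaschkeProduct z η ∈ (regularAt w).matrix :=
  prod_reverse_ofFn_mem fun k => blaschkeFactorInv_mem_regularAt (hw k) _

theorem inverseBlaschkeProduct_mem_proper : inverseBlaschkeProduct z η ∈ (proper ℂ).matrix :=
  prod_reverse_ofFn_mem fun _ => blaschkeFactorInv_mem_proper _ _

theorem map_eval_inverseBlaschkeProduct {s : ℂ}
    (hη : ∀ k, ∑ i, starRingEnd ℂ (η k i) * η k i = 1)
    (hsz : ∀ k, s ≠ z k) (hs : ∀ k, s + starRingEnd ℂ (z k) ≠ 0) :
    (inverseBlaschkeProduct z η).map (eval (RingHom.id ℂ) s) =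
      (List.ofFn fun k => blaschkeFactor m (z k) (η k) s).prod⁻¹ := by
  rw [inverseBlaschkeProduct,
    map_eval_prod_reverse_ofFn fun k => blaschkeFactorInv_mem_regularAt (hsz k) _,
    Matrix.list_prod_inv_reverse, List.map_reverse, List.map_ofFn]
  simp_rw [Function.comp_def, map_eval_blaschkeFactorInv (hη _) (hsz _) (hs _)]

theorem prod_ite_blaschkeFactorInv_mem_regularAt (p : Fin n → Prop) [DecidablePred p] {w : ℂ}
    (hp : ∀ k, p k → w ≠ z k) :
    (List.ofFn fun k => if p k then blaschkeFactorInv m (z k) (η k) else 1).reverse.prod ∈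
      (regularAt w).matrix :=
  prod_reverse_ofFn_mem fun k => by
    split_ifs with h
    exacts [blaschkeFactorInv_mem_regularAt (hp k h) _, one_mem _]

theorem map_eval_prod_ite_blaschkeFactorInv (p : Fin n → Prop) [DecidablePred p] {w : ℂ}
    (hη : ∀ k, ∑ i, starRingEnd ℂ (η k i) * η k i = 1) (hp : ∀ k, p k → w ≠ z k)
    (hw : ∀ k, w + starRingEnd ℂ (z k) ≠ 0) :
    ((List.ofFn fun k => if p k then blaschkeFactorInv m (z k) (η k) else 1).reverse.prod).map
        (eval (RingHom.id ℂ) w) =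
      (List.ofFn fun k =>
        if p k then (blaschkeFactor m (z k) (η k) w)⁻¹ else 1).reverse.prod := by
  rw [map_eval_prod_reverse_ofFn fun k => by
    split_ifs with h
    exacts [blaschkeFactorInv_mem_regularAt (hp k h) _, one_mem _]]
  congr
  funext k
  split_ifs with h
  exacts [map_eval_blaschkeFactorInv (hη k) (hp k h) (hw k),
    Matrix.map_one _ (eval_zero _ _) (eval_one _ _)]

noncomputable def stablePart : Matrix (Fin m) (Fin m) (RatFunc ℂ) :=
  inverseBlaschkeProduct z η * Y - ∑ i, simplePole (z i) (residueMatrix m n z η Y i)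

theorem stablePart_mem_proper (hY : Y ∈ (proper ℂ).matrix) :
    stablePart z η Y ∈ (proper ℂ).matrix :=
  sub_mem (mul_mem (inverseBlaschkeProduct_mem_proper z η) hY)
    (sum_mem fun _ _ => simplePole_mem_proper _ _)

theorem stablePart_mem_regularAt_of_ne {w : ℂ} (hw : ∀ k, w ≠ z k)
    (hY : Y ∈ (regularAt w).matrix) : stablePart z η Y ∈ (regularAt w).matrix :=
  sub_mem (mul_mem (inverseBlaschkeProduct_mem_regularAt z η hw) hY)
    (sum_mem fun i _ => simplePole_mem_regularAt (hw i) _)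

theorem stablePart_mem_regularAt_self (hz : ∀ k, 0 < (z k).re) (hdist : Function.Injective z)
    (hη : ∀ k, ∑ l, starRingEnd ℂ (η k l) * η k l = 1) (i : Fin n)
    (hY : Y ∈ (regularAt (z i)).matrix) : stablePart z η Y ∈ (regularAt (z i)).matrix := by
  have hne : ∀ k, k ≠ i → z i ≠ z k := fun k hk h => hk (hdist h).symm
  have hconj : ∀ k, z i + starRingEnd ℂ (z k) ≠ 0 := fun k h => by
    have := congrArg Complex.re h
    simp only [Complex.add_re, Complex.conj_re, Complex.zero_re] at this
    linarith [hz i, hz k]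
  set A :=
    (List.ofFn fun k => if i < k then blaschkeFactorInv m (z k) (η k) else 1).reverse.prod
  set B :=
    (List.ofFn fun k => if k < i then blaschkeFactorInv m (z k) (η k) else 1).reverse.prod
  set N := (2 * ((z i).re : ℂ)) • vecMulVec (η i) fun l => starRingEnd ℂ (η i l)
  set M := A * N.map C * B * Y
  have hA : A ∈ (regularAt (z i)).matrix :=
    prod_ite_blaschkeFactorInv_mem_regularAt z η _ fun k h => hne k (ne_of_gt h)
  have hB : B ∈ (regularAt (z i)).matrix :=
    prod_ite_blaschkeFactorInv_mem_regularAt z η _ fun k h => hne k (ne_of_lt h)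
  have hAN : A * N.map C ∈ (regularAt (z i)).matrix := mul_mem hA (map_C_mem_regularAt N)
  have hM : M ∈ (regularAt (z i)).matrix := mul_mem (mul_mem hAN hB) hY
  have hMi : M.map (eval (RingHom.id ℂ) (z i)) = residueMatrix m n z η Y i := by
    rw [map_eval_mul (mul_mem hAN hB) hY, map_eval_mul hAN hB,
      map_eval_mul hA (map_C_mem_regularAt N), map_eval_map_C,
      map_eval_prod_ite_blaschkeFactorInv z η _ hη (fun k h => hne k (ne_of_gt h)) hconj,
      map_eval_prod_ite_blaschkeFactorInv z η _ hη (fun k h => hne k (ne_of_lt h)) hconj,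
      residueMatrix]
  have hsplit : stablePart z η Y = A * B * Y +
      ((X - C (z i))⁻¹ • M - simplePole (z i) (M.map (eval (RingHom.id ℂ) (z i)))) -
      ∑ j ∈ Finset.univ.erase i, simplePole (z j) (residueMatrix m n z η Y j) := by
    have hi : blaschkeFactorInv m (z i) (η i) = 1 + (X - C (z i))⁻¹ • N.map C := rfl
    rw [hMi, stablePart, inverseBlaschkeProduct, prod_reverse_ofFn_split _ i, hi,
      ← Finset.add_sum_erase _ _ (Finset.mem_univ i)]
    simp only [mul_add, add_mul, mul_one, Matrix.mul_smul, Matrix.smul_mul, M]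
    abel
  rw [hsplit]
  exact sub_mem (add_mem (mul_mem (mul_mem hA hB) hY)
    (inv_X_sub_C_smul_sub_simplePole_mem_regularAt hM))
    (sum_mem fun j hj => simplePole_mem_regularAt (hne j (Finset.ne_of_mem_erase hj)) _)

theorem stablePart_mem_regularAt (hz : ∀ k, 0 < (z k).re) (hdist : Function.Injective z)
    (hη : ∀ k, ∑ l, starRingEnd ℂ (η k l) * η k l = 1) {w : ℂ}
    (hY : Y ∈ (regularAt w).matrix) : stablePart z η Y ∈ (regularAt w).matrix := by
  by_cases hw : ∃ k, w = z k
  · obtain ⟨k, rfl⟩ := hw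
    exact stablePart_mem_regularAt_self z η Y hz hdist hη k hY
  · exact stablePart_mem_regularAt_of_ne z η Y (fun k h => hw ⟨k, h⟩) hY

theorem inv_prod_blaschkeFactor_mul_eq (hη : ∀ k, ∑ l, starRingEnd ℂ (η k l) * η k l = 1)
    {s : ℂ} (hsz : ∀ k, s ≠ z k) (hs : ∀ k, s + starRingEnd ℂ (z k) ≠ 0)
    (hY : Y ∈ (regularAt s).matrix) :
    (List.ofFn fun k => blaschkeFactor m (z k) (η k) s).prod⁻¹ *
        Y.map (eval (RingHom.id ℂ) s) =
      (stablePart z η Y).map (eval (RingHom.id ℂ) s) +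
        ∑ i, (1 / (s - z i)) • residueMatrix m n z η Y i := by
  have hD : ∀ i ∈ Finset.univ,
      simplePole (z i) (residueMatrix m n z η Y i) ∈ (regularAt s).matrix :=
    fun i _ => simplePole_mem_regularAt (hsz i) _
  have hsplit : inverseBlaschkeProduct z η * Y =
      stablePart z η Y + ∑ i, simplePole (z i) (residueMatrix m n z η Y i) :=
    (sub_add_cancel _ _).symm
  rw [← map_eval_inverseBlaschkeProduct z η hη hsz hs,
    ← map_eval_mul (inverseBlaschkeProduct_mem_regularAt z η hsz) hY, hsplit,
    map_eval_add (stablePart_mem_regularAt_of_ne z η Y hsz hY) (sum_mem hD), map_eval_sum _ hD]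
  simp only [map_eval_simplePole (hsz _), one_div]

end Blaschke

/-- Matrix form of Lemma 1: for distinct NMP zeros `z_i` with directions `η_i` and a
stable proper rational matrix `Y`, there is a stable proper rational matrix `T` with
`L(s)⁻¹ Y(s) = T(s) + Σ_i (1/(s - z_i)) R_i` wherever all terms are defined. -/
theorem inverse_blaschke_partial_fraction_matrix
    (m n : ℕ) (z : Fin n → ℂ) (hz : ∀ i, 0 < (z i).re)
    (hdist : Function.Injective z)
    (η : Fin n → Fin m → ℂ)
    (hη : ∀ k, ∑ i, starRingEnd ℂ (η k i) * η k i = 1)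
    (Y : Matrix (Fin m) (Fin m) (RatFunc ℂ))
    (hY_proper : ∀ i j, (Y i j).num.degree ≤ (Y i j).denom.degree)
    (hY_stable : ∀ i j, ∀ x : ℂ, Polynomial.eval x (Y i j).denom = 0 → x.re < 0) :
    ∃ T : Matrix (Fin m) (Fin m) (RatFunc ℂ),
      (∀ i j, (T i j).num.degree ≤ (T i j).denom.degree) ∧
      (∀ i j, ∀ x : ℂ, Polynomial.eval x (T i j).denom = 0 → x.re < 0) ∧
      ∀ s : ℂ, (∀ k, s ≠ z k) → (∀ k, s ≠ -starRingEnd ℂ (z k)) →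
        (∀ i j, Polynomial.eval s (Y i j).denom ≠ 0) →
        (∀ i j, Polynomial.eval s (T i j).denom ≠ 0) →
        ((List.ofFn fun k : Fin n => blaschkeFactor m (z k) (η k) s).prod)⁻¹ *
            (Y.map (RatFunc.eval (RingHom.id ℂ) s))
          = T.map (RatFunc.eval (RingHom.id ℂ) s) +
            ∑ i, (1 / (s - z i)) • residueMatrix m n z η Y i := by
  have hYreg : ∀ x : ℂ, 0 ≤ x.re → Y ∈ (regularAt x).matrix := fun x hx i j h =>
    (hY_stable i j x h).not_ge hx
  have hT := stablePart_mem_proper z η Y fun i j => mem_proper.2 (hY_proper i j)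
  refine ⟨stablePart z η Y, fun i j => mem_proper.1 (hT i j), fun i j x hx => ?_,
    fun s hsz hs hsY _ => ?_⟩
  · by_contra! hre
    exact stablePart_mem_regularAt z η Y hz hdist hη (hYreg x hre) i j hx
  · exact inv_prod_blaschkeFactor_mul_eq z η Y hη hsz
      (fun k h => hs k (eq_neg_of_add_eq_zero_left h)) hsY
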